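/- For positive real p₁,…,pₙ with Σpⱼ = 1 and ρ = diag(p₁,…,pₙ), define the Hadamard-multiplier operator Φ̃_ρ on ℂ^{n×n} by (Φ̃_ρ(y))_{jk} = Φ̃(r_{jk})·y_{jk} where r_{jk} = √(p_j/p_k) and Φ̃(r) = (1/2)((r²+1)/(r²-1))·log r² (with Φ̃(1) = 1). Then Φ̃_ρ is self-adjoint with respect to the Hilbert–Schmidt inner product, and Tr[y*·Φ̃_ρ(y)] ≥ Tr(y*y) = Σ_{j,k}|y_{jk}|² for all y ∈ ℂ^{n×n}. -/

import Mathlib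

/-!
`Φ̃_ρ` is the Hadamard product with the real matrix of multipliers `Φ̃(r_{jk})`, so it is
symmetric for the Hilbert–Schmidt form and `Re Tr[y*·Φ̃_ρ(y)] = Σ_{j,k} Φ̃(r_{jk})·|y_{jk}|²`.
The pointwise bound `Φ̃ ≥ 1` amounts to `log t ≥ 2(t-1)/(t+1)` for `t ≥ 1`, the first term of the
series of `log((1+x)/(1-x))` at `x = (t-1)/(t+1)`; the case `t < 1` follows from the symmetry
`t ↦ t⁻¹`.
-/

open Matrix

/-- Φ̃(r) = (1/2)·((r²+1)/(r²-1))·log(r²), with limiting values Φ̃(±1) = 1. -/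
noncomputable def PhiTilde (r : ℝ) : ℝ :=
  if r = 1 ∨ r = -1 then 1 else (1 / 2) * ((r ^ 2 + 1) / (r ^ 2 - 1)) * Real.log (r ^ 2)

/-- The Hadamard-multiplier operator `Φ̃_ρ` on `ℂ^{n×n}`:
`(Φ̃_ρ(y))_{jk} = Φ̃(√(p_j/p_k))·y_{jk}`. -/
noncomputable def phiTildeOp {n : ℕ} (p : Fin n → ℝ) (y : Matrix (Fin n) (Fin n) ℂ) :
    Matrix (Fin n) (Fin n) ℂ :=
  Matrix.of fun j k => (PhiTilde (Real.sqrt (p j / p k)) : ℂ) * y j k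

namespace Real

theorem two_mul_sub_one_div_add_one_le_log {t : ℝ} (ht : 1 ≤ t) :
    2 * (t - 1) / (t + 1) ≤ log t := by
  have hx : (t - 1) / (t + 1) < 1 := by rw [div_lt_one (by linarith)]; linarith
  have key := sum_range_le_log_div (by positivity : 0 ≤ (t - 1) / (t + 1)) hx 1
  have ht' : (1 + (t - 1) / (t + 1)) / (1 - (t - 1) / (t + 1)) = t := by
    field_simp; ring
  rw [Finset.sum_range_one, ht'] at key
  simp only [mul_zero, zero_add, pow_one, CharP.cast_eq_zero, div_one] at key
  rw [mul_div_assoc]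
  linarith

theorem add_one_div_sub_one_mul_log_inv (t : ℝ) :
    (t⁻¹ + 1) / (t⁻¹ - 1) * log t⁻¹ = (t + 1) / (t - 1) * log t := by
  rcases eq_or_ne t 0 with rfl | ht
  · simp
  rw [← mul_div_mul_left _ _ ht, mul_add, mul_sub, mul_inv_cancel₀ ht, mul_one, ← neg_sub t 1,
    div_neg, add_comm, log_inv, neg_mul_neg]

theorem two_le_add_one_div_sub_one_mul_log {t : ℝ} (ht : 0 < t) (ht1 : t ≠ 1) :
    2 ≤ (t + 1) / (t - 1) * log t := by
  wlog h : 1 < t generalizing t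
  · rw [← add_one_div_sub_one_mul_log_inv]
    exact this (inv_pos.2 ht) (inv_ne_one.2 ht1)
      ((one_lt_inv₀ ht).2 (lt_of_le_of_ne (not_lt.1 h) ht1))
  calc 2 = (t + 1) / (t - 1) * (2 * (t - 1) / (t + 1)) := by
        field_simp [sub_ne_zero.2 ht1]
    _ ≤ (t + 1) / (t - 1) * log t :=
        mul_le_mul_of_nonneg_left (two_mul_sub_one_div_add_one_le_log h.le)
          (div_nonneg (by linarith) (by linarith))

end Real

theorem one_le_PhiTilde {r : ℝ} (hr : r ≠ 0) : 1 ≤ PhiTilde r := by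
  unfold PhiTilde
  split_ifs with h
  · rfl
  · have := Real.two_le_add_one_div_sub_one_mul_log (by positivity) (mt sq_eq_one_iff.1 h)
    linarith

namespace Matrix

variable {m n R 𝕜 : Type*} [Fintype m] [Fintype n]

theorem trace_conjTranspose_mul_eq_sum [AddCommMonoid R] [Mul R] [Star R]
    (A B : Matrix m n R) :
    (Aᴴ * B).trace = ∑ i, ∑ j, star (A i j) * B i j := by
  simp only [trace, diag, mul_apply, conjTranspose_apply]
  exact Finset.sum_comm

variable [RCLike 𝕜]

theorem re_trace_conjTranspose_mul_self (A : Matrix m n 𝕜) :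
    RCLike.re (Aᴴ * A).trace = ∑ i, ∑ j, ‖A i j‖ ^ 2 := by
  simp [trace_conjTranspose_mul_eq_sum, RCLike.conj_mul]

theorem trace_conjTranspose_mul_ofReal_hadamard (W : Matrix m n ℝ) (A B : Matrix m n 𝕜) :
    (Aᴴ * (W.map (↑) ⊙ B)).trace = ((W.map (↑) ⊙ A)ᴴ * B).trace := by
  simp only [trace_conjTranspose_mul_eq_sum, hadamard_apply, map_apply, star_mul',
    RCLike.star_def, RCLike.conj_ofReal]
  exact Finset.sum_congr rfl fun i _ => Finset.sum_congr rfl fun j _ => by ring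

theorem re_trace_conjTranspose_mul_ofReal_hadamard_self (W : Matrix m n ℝ) (A : Matrix m n 𝕜) :
    RCLike.re (Aᴴ * (W.map (↑) ⊙ A)).trace = ∑ i, ∑ j, W i j * ‖A i j‖ ^ 2 := by
  simp only [trace_conjTranspose_mul_eq_sum, hadamard_apply, map_apply, map_sum]
  refine Finset.sum_congr rfl fun i _ => Finset.sum_congr rfl fun j _ => ?_
  rw [RCLike.star_def, mul_left_comm, RCLike.conj_mul]
  norm_cast

theorem re_trace_conjTranspose_mul_self_le_ofReal_hadamard {W : Matrix m n ℝ}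
    (hW : ∀ i j, 1 ≤ W i j) (A : Matrix m n 𝕜) :
    RCLike.re (Aᴴ * A).trace ≤ RCLike.re (Aᴴ * (W.map (↑) ⊙ A)).trace := by
  rw [re_trace_conjTranspose_mul_self, re_trace_conjTranspose_mul_ofReal_hadamard_self]
  gcongr with i _ j _
  exact le_mul_of_one_le_left (by positivity) (hW i j)

end Matrix

noncomputable def phiTildeWeights {n : ℕ} (p : Fin n → ℝ) : Matrix (Fin n) (Fin n) ℝ :=
  of fun j k => PhiTilde (Real.sqrt (p j / p k))

theorem phiTildeOp_eq_hadamard {n : ℕ} (p : Fin n → ℝ) (y : Matrix (Fin n) (Fin n) ℂ) :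
    phiTildeOp p y = (phiTildeWeights p).map (↑) ⊙ y :=
  rfl

theorem one_le_phiTildeWeights {n : ℕ} {p : Fin n → ℝ} (hp : ∀ j, 0 < p j) (j k : Fin n) :
    1 ≤ phiTildeWeights p j k :=
  one_le_PhiTilde (Real.sqrt_pos.2 (div_pos (hp j) (hp k))).ne'

theorem phiTildeOp_selfAdjoint_and_ge_general {n : ℕ} (p : Fin n → ℝ)
    (hp : ∀ j, 0 < p j) :
    (∀ a b : Matrix (Fin n) (Fin n) ℂ,
        Matrix.trace (aᴴ * phiTildeOp p b) = Matrix.trace ((phiTildeOp p a)ᴴ * b)) ∧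
    (∀ y : Matrix (Fin n) (Fin n) ℂ,
        (Matrix.trace (yᴴ * phiTildeOp p y)).re ≥ (Matrix.trace (yᴴ * y)).re ∧
        (Matrix.trace (yᴴ * y)).re = ∑ j : Fin n, ∑ k : Fin n, ‖y j k‖ ^ 2) := by
  simp only [phiTildeOp_eq_hadamard]
  exact ⟨trace_conjTranspose_mul_ofReal_hadamard _, fun y =>
    ⟨re_trace_conjTranspose_mul_self_le_ofReal_hadamard (one_le_phiTildeWeights hp) y,
      re_trace_conjTranspose_mul_self y⟩⟩

/-- For `ρ = diag(p₁,…,pₙ)` with `pⱼ > 0`, `Σpⱼ = 1`, the operator `Φ̃_ρ` is self-adjoint for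
the Hilbert–Schmidt inner product, and `Tr[y*·Φ̃_ρ(y)] ≥ Tr(y*y) = Σ_{j,k}|y_{jk}|²`. -/
theorem phiTildeOp_selfAdjoint_and_ge {n : ℕ} (p : Fin n → ℝ)
    (hp : ∀ j, 0 < p j) (hp1 : ∑ j, p j = 1) :
    (∀ a b : Matrix (Fin n) (Fin n) ℂ,
        Matrix.trace (aᴴ * phiTildeOp p b) = Matrix.trace ((phiTildeOp p a)ᴴ * b)) ∧
    (∀ y : Matrix (Fin n) (Fin n) ℂ,
        (Matrix.trace (yᴴ * phiTildeOp p y)).re ≥ (Matrix.trace (yᴴ * y)).re ∧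
        (Matrix.trace (yᴴ * y)).re = ∑ j : Fin n, ∑ k : Fin n, ‖y j k‖ ^ 2) :=
  phiTildeOp_selfAdjoint_and_ge_general p hp
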